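/- arXiv:1702.03128 — 10 statements merged into one kernel-verified Lean document; each statement's English description precedes it below -/
import Mathlib

section
/- For all real numbers z0 > 0, A > 0 and B > 0, the double integral ∫_{-A}^{A} ∫_{-B}^{B} (1/(4π)) · z0 / (z0² + x² + y²)^{3/2} dy dx equals (1/π) · arctan( A·B / ( z0 · √(A² + B² + z0²) ) ). -/
/-!
Both integrations are elementary. With `c = z0² + x²`, the inner integrand `(c + y²)^(-3/2)`
has antiderivative `y / (c √(c + y²))`, so the inner integral is
`z0 B / (2π (z0² + x²) √(z0² + x² + B²))`. This is in turn the derivative in `x` of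
`arctan (B x / (z0 √(z0² + x² + B²))) / (2π)`, an odd function, whence the arctangent formula.
-/

open Real MeasureTheory

lemma rpow_three_halves_eq_mul_sqrt {u : ℝ} (hu : 0 ≤ u) : u ^ ((3 : ℝ) / 2) = u * √u := by
  rw [show (3 : ℝ) / 2 = 1 + 1 / 2 by norm_num, rpow_add' hu (by norm_num), rpow_one,
    sqrt_eq_rpow]

lemma hasDerivAt_sqrt_const_add_sq (c : ℝ) {y : ℝ} (hy : 0 < c + y ^ 2) :
    HasDerivAt (fun t => √(c + t ^ 2)) (y / √(c + y ^ 2)) y := by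
  refine (((hasDerivAt_pow 2 y).const_add c).sqrt hy.ne').congr_deriv ?_
  field_simp
  norm_num

lemma hasDerivAt_div_mul_sqrt_add_sq {c : ℝ} (hc : 0 < c) (y : ℝ) :
    HasDerivAt (fun t => t / (c * √(c + t ^ 2))) (1 / (c + y ^ 2) ^ ((3 : ℝ) / 2)) y := by
  have hpos : 0 < c + y ^ 2 := by positivity
  have hsq : √(c + y ^ 2) ^ 2 = c + y ^ 2 := sq_sqrt hpos.le
  have hr : 0 < √(c + y ^ 2) := sqrt_pos.2 hpos
  refine ((hasDerivAt_id y).div ((hasDerivAt_sqrt_const_add_sq c hpos).const_mul c)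
    (by positivity)).congr_deriv ?_
  rw [rpow_three_halves_eq_mul_sqrt hpos.le, id]
  field_simp
  linear_combination y ^ 2 * hsq

lemma integral_one_div_add_sq_rpow_three_halves {c : ℝ} (hc : 0 < c) (a b : ℝ) :
    ∫ y in a..b, 1 / (c + y ^ 2) ^ ((3 : ℝ) / 2)
      = b / (c * √(c + b ^ 2)) - a / (c * √(c + a ^ 2)) := by
  refine intervalIntegral.integral_eq_sub_of_hasDerivAt
    (fun y _ => hasDerivAt_div_mul_sqrt_add_sq hc y) (Continuous.intervalIntegrable ?_ a b)
  refine continuous_const.div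
    ((continuous_const.add (continuous_pow 2)).rpow_const fun _ => Or.inr (by norm_num))
    fun y => ?_
  positivity

lemma hasDerivAt_arctan_mul_div_mul_sqrt {a : ℝ} (ha : a ≠ 0) (b x : ℝ) :
    HasDerivAt (fun t => arctan (b * t / (a * √(a ^ 2 + t ^ 2 + b ^ 2))))
      (a * b / ((a ^ 2 + x ^ 2) * √(a ^ 2 + x ^ 2 + b ^ 2))) x := by
  have hpos : 0 < a ^ 2 + b ^ 2 + x ^ 2 := by positivity
  have hsq : √(a ^ 2 + b ^ 2 + x ^ 2) ^ 2 = a ^ 2 + b ^ 2 + x ^ 2 := sq_sqrt hpos.le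
  have hr : 0 < √(a ^ 2 + b ^ 2 + x ^ 2) := sqrt_pos.2 hpos
  have hsum (t : ℝ) : a ^ 2 + t ^ 2 + b ^ 2 = a ^ 2 + b ^ 2 + t ^ 2 := by ring
  simp only [hsum]
  refine (((hasDerivAt_id x).const_mul b).div
    ((hasDerivAt_sqrt_const_add_sq (a ^ 2 + b ^ 2) hpos).const_mul a)
    (by positivity)).arctan.congr_deriv ?_
  simp only [Pi.div_apply, id, mul_one]
  field_simp
  linear_combination b * x ^ 2 * hsq

lemma integral_mul_div_mul_sqrt {a : ℝ} (ha : a ≠ 0) (b A : ℝ) :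
    ∫ x in (-A)..A, a * b / ((a ^ 2 + x ^ 2) * √(a ^ 2 + x ^ 2 + b ^ 2))
      = 2 * arctan (b * A / (a * √(a ^ 2 + A ^ 2 + b ^ 2))) := by
  rw [intervalIntegral.integral_eq_sub_of_hasDerivAt
    (fun x _ => hasDerivAt_arctan_mul_div_mul_sqrt ha b x) (Continuous.intervalIntegrable ?_ _ _)]
  · rw [neg_sq, mul_neg, neg_div, arctan_neg]
    ring
  refine continuous_const.div (by fun_prop) fun x => ?_
  have : 0 < a ^ 2 + x ^ 2 := by positivity
  positivity

theorem received_power_rectangle_general (z0 A B : ℝ) (hz0 : 0 < z0) :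
    (∫ x in (-A)..A, ∫ y in (-B)..B,
        (1 / (4 * π)) * z0 / (z0 ^ 2 + x ^ 2 + y ^ 2) ^ ((3 : ℝ) / 2))
      = (1 / π) * Real.arctan (A * B / (z0 * Real.sqrt (A ^ 2 + B ^ 2 + z0 ^ 2))) := by
  have h_inner (x : ℝ) :
      ∫ y in (-B)..B, (1 / (4 * π)) * z0 / (z0 ^ 2 + x ^ 2 + y ^ 2) ^ ((3 : ℝ) / 2)
        = 1 / (2 * π) * (z0 * B / ((z0 ^ 2 + x ^ 2) * √(z0 ^ 2 + x ^ 2 + B ^ 2))) := by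
    have hc : 0 < z0 ^ 2 + x ^ 2 := by positivity
    simp only [mul_div_assoc, ← mul_one_div z0, intervalIntegral.integral_const_mul,
      integral_one_div_add_sq_rpow_three_halves hc, neg_sq]
    field_simp
    ring
  rw [intervalIntegral.integral_congr fun x _ => h_inner x, intervalIntegral.integral_const_mul,
    integral_mul_div_mul_sqrt hz0.ne', mul_comm B A,
    show z0 ^ 2 + A ^ 2 + B ^ 2 = A ^ 2 + B ^ 2 + z0 ^ 2 by ring]
  field_simp

/-- Fraction of isotropically radiated power from a point at distance `z0` received by
the rectangular surface `[-A,A] × [-B,B]` at `z = 0` (Eqs. (6)–(7) of the paper). -/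
theorem received_power_rectangle (z0 A B : ℝ) (hz0 : 0 < z0) (hA : 0 < A) (hB : 0 < B) :
    (∫ x in (-A)..A, ∫ y in (-B)..B,
        (1 / (4 * π)) * z0 / (z0 ^ 2 + x ^ 2 + y ^ 2) ^ ((3 : ℝ) / 2))
      = (1 / π) * Real.arctan (A * B / (z0 * Real.sqrt (A ^ 2 + B ^ 2 + z0 ^ 2))) :=
  received_power_rectangle_general z0 A B hz0
end

section
/- Let θ > 0, set β = ⌊1/θ⌋ and α = 1/θ − β, and for f ∈ ℝ define N_θ(f) = #{k ∈ ℤ : |f − kθ| < 1/2}. Then: (a) for every f ∈ ℝ such that f − kθ ∉ {−1/2, 1/2} for all k ∈ ℤ, N_θ(f) ∈ {β, β+1}; and (b) the Lebesgue measure of the set {f ∈ [−θ/2, θ/2] : N_θ(f) = β + 1} equals 1 − βθ (which equals θα). -/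
open Real MeasureTheory

private lemma count_eq (θ : ℝ) (hθ : 0 < θ) (f : ℝ)
    (hb : ∀ k : ℤ, f - k * θ ≠ -(1 / 2) ∧ f - k * θ ≠ 1 / 2) :
    ({k : ℤ | |f - k * θ| < 1 / 2}.ncard : ℤ)
      = ⌊(f + 1 / 2) / θ⌋ - ⌊(f - 1 / 2) / θ⌋ := by
  have hset : {k : ℤ | |f - k * θ| < 1 / 2}
      = ↑(Finset.Ioc ⌊(f - 1 / 2) / θ⌋ ⌊(f + 1 / 2) / θ⌋) := by
    ext k
    simp only [Set.mem_setOf_eq, Finset.coe_Ioc, Set.mem_Ioc, abs_lt]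
    constructor
    · rintro ⟨h1, h2⟩
      refine ⟨Int.floor_lt.2 ?_, Int.le_floor.2 ?_⟩
      · rw [div_lt_iff₀ hθ]; linarith
      · rw [le_div_iff₀ hθ]; linarith
    · rintro ⟨h1, h2⟩
      have h1' : (f - 1 / 2) / θ < k := Int.floor_lt.1 h1
      have h2' : (k : ℝ) ≤ (f + 1 / 2) / θ := Int.le_floor.1 h2
      rw [div_lt_iff₀ hθ] at h1'
      rw [le_div_iff₀ hθ] at h2'
      have hne := (hb k).1
      constructor
      · rcases lt_or_eq_of_le (by linarith : -(1/2 : ℝ) ≤ f - k * θ) with h | h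
        · exact h
        · exact absurd h.symm hne
      · linarith
  have hle : ⌊(f - 1 / 2) / θ⌋ ≤ ⌊(f + 1 / 2) / θ⌋ := by
    apply Int.floor_mono
    gcongr <;> linarith
  rw [hset, Set.ncard_coe_finset]
  exact Int.card_Ioc_of_le _ _ hle

private lemma mem_iff_count (θ : ℝ) (hθ : 0 < θ) (f : ℝ)
    (hb : ∀ k : ℤ, f - k * θ ≠ -(1 / 2) ∧ f - k * θ ≠ 1 / 2) :
    (({k : ℤ | |f - k * θ| < 1 / 2}.ncard : ℤ) = ⌊1 / θ⌋ + 1) ↔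
      f ∈ ⋃ m : ℤ, Set.Ioo ((m : ℝ) * θ + 1 / 2 - (1 - (⌊1 / θ⌋ : ℝ) * θ))
        ((m : ℝ) * θ + 1 / 2) := by
  have hβ1 : (⌊1 / θ⌋ : ℝ) ≤ 1 / θ := Int.floor_le _
  have hβ2 : (1 / θ : ℝ) < ⌊1 / θ⌋ + 1 := Int.lt_floor_add_one _
  have hθ' : θ ≠ 0 := ne_of_gt hθ
  have hinv : (1 / θ) * θ = 1 := by field_simp
  rw [count_eq θ hθ f hb]
  set β : ℤ := ⌊1 / θ⌋ with hβ
  set a : ℝ := (f - 1 / 2) / θ with ha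
  have hfa : f = θ * a + 1 / 2 := by rw [ha]; field_simp; ring
  have hab : (f + 1 / 2) / θ = a + 1 / θ := by rw [ha]; field_simp; ring
  rw [hab]
  constructor
  · intro h
    refine Set.mem_iUnion.2 ⟨⌊a⌋ + 1, ?_⟩
    have hfl : ⌊a + 1 / θ⌋ = ⌊a⌋ + β + 1 := by omega
    have h1 : (⌊a⌋ : ℝ) + β + 1 ≤ a + 1 / θ := by
      have := Int.floor_le (a + 1 / θ); rw [hfl] at this; push_cast at this; linarith
    have h1' : (⌊a⌋ : ℝ) + β + 1 < a + 1 / θ := by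
      rcases lt_or_eq_of_le h1 with h' | h'
      · exact h'
      · exfalso
        apply (hb (⌊a⌋ + β + 1)).1
        push_cast
        have e : ((⌊a⌋ : ℝ) + β + 1) * θ = (a + 1 / θ) * θ := by rw [h']
        linear_combination hfa - e - hinv
    have h2 : a < (⌊a⌋ : ℝ) + 1 := Int.lt_floor_add_one a
    rw [Set.mem_Ioo]
    have h1θ : ((⌊a⌋ : ℝ) + β + 1) * θ < a * θ + 1 := by
      nlinarith [h1', hθ, hinv]
    constructor
    · push_cast
      rw [hfa]; nlinarith
    · push_cast
      rw [hfa]; nlinarith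
  · intro h
    obtain ⟨m, hm⟩ := Set.mem_iUnion.1 h
    rw [Set.mem_Ioo] at hm
    obtain ⟨hm1, hm2⟩ := hm
    rw [hfa] at hm1 hm2
    have hb1 : (m : ℝ) + β ≤ a + 1 / θ := by
      apply le_of_lt
      apply lt_of_mul_lt_mul_right ?_ hθ.le
      nlinarith [hm1, hθ, hinv]
    have ha2 : a < (m : ℝ) := by
      apply lt_of_mul_lt_mul_right ?_ hθ.le
      nlinarith
    have hb2 : a + 1 / θ < (m : ℝ) + β + 1 := by linarith
    have ha1 : (m : ℝ) - 1 ≤ a := by linarith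
    have hfla : ⌊a⌋ = m - 1 := by
      rw [Int.floor_eq_iff]
      constructor <;> push_cast <;> linarith
    have hflb : ⌊a + 1 / θ⌋ = m + β := by
      rw [Int.floor_eq_iff]
      constructor <;> push_cast <;> linarith
    omega

/-- Counting lemma for the folded rectangular spectrum (key step in Property 1 of the
paper). For `θ > 0`, `N_θ(f) = #{k ∈ ℤ : |f - kθ| < 1/2}`. With `β = ⌊1/θ⌋`:
(a) away from the boundary points, `N_θ(f) ∈ {β, β+1}`;
(b) the Lebesgue measure of `{f ∈ [-θ/2, θ/2] : N_θ(f) = β + 1}` equals `1 - βθ`. -/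
theorem folded_spectrum_counting (θ : ℝ) (hθ : 0 < θ) :
    (∀ f : ℝ, (∀ k : ℤ, f - k * θ ≠ -(1 / 2) ∧ f - k * θ ≠ 1 / 2) →
        (({k : ℤ | |f - k * θ| < 1 / 2}.ncard : ℤ) = ⌊1 / θ⌋ ∨
          ({k : ℤ | |f - k * θ| < 1 / 2}.ncard : ℤ) = ⌊1 / θ⌋ + 1)) ∧
    volume {f : ℝ | f ∈ Set.Icc (-(θ / 2)) (θ / 2) ∧
        ({k : ℤ | |f - k * θ| < 1 / 2}.ncard : ℤ) = ⌊1 / θ⌋ + 1}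
      = ENNReal.ofReal (1 - (⌊1 / θ⌋ : ℝ) * θ) := by
  have hθ' : θ ≠ 0 := ne_of_gt hθ
  have hβ1 : (⌊1 / θ⌋ : ℝ) ≤ 1 / θ := Int.floor_le _
  have hβ2 : (1 / θ : ℝ) < ⌊1 / θ⌋ + 1 := Int.lt_floor_add_one _
  have hinv : (1 / θ) * θ = 1 := by field_simp
  have hβθ1 : (⌊1 / θ⌋ : ℝ) * θ ≤ 1 := by nlinarith [hβ1, hθ, hinv]
  have hβθ2 : 1 < ((⌊1 / θ⌋ : ℝ) + 1) * θ := by nlinarith [hβ2, hθ, hinv]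
  constructor
  · -- part (a)
    intro f hb
    rw [count_eq θ hθ f hb]
    set a : ℝ := (f - 1 / 2) / θ with ha
    have hab : (f + 1 / 2) / θ = a + 1 / θ := by rw [ha]; field_simp; ring
    rw [hab]
    have h1 : ⌊a⌋ + ⌊1 / θ⌋ ≤ ⌊a + 1 / θ⌋ := by
      apply Int.le_floor.2
      push_cast
      have := Int.floor_le a
      linarith
    have h2 : ⌊a + 1 / θ⌋ < ⌊a⌋ + ⌊1 / θ⌋ + 2 := by
      apply Int.floor_lt.2
      push_cast
      have := Int.lt_floor_add_one a
      linarith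
    omega
  · -- part (b)
    set B : Set ℝ := ⋃ m : ℤ,
      Set.Ioo ((m : ℝ) * θ + 1 / 2 - (1 - (⌊1 / θ⌋ : ℝ) * θ)) ((m : ℝ) * θ + 1 / 2) with hB
    set C : Set ℝ := ⋃ k : ℤ, ({(k : ℝ) * θ - 1 / 2, (k : ℝ) * θ + 1 / 2} : Set ℝ) with hC
    have hCcount : C.Countable :=
      Set.countable_iUnion fun k =>
        (Set.toFinite _).countable
    have hCnull : volume C = 0 := hCcount.measure_zero _
    have hbdd : ∀ f : ℝ, f ∉ C → ∀ k : ℤ, f - k * θ ≠ -(1 / 2) ∧ f - k * θ ≠ 1 / 2 := by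
      intro f hf k
      constructor
      · intro h
        exact hf (Set.mem_iUnion.2 ⟨k, Or.inl (by linarith)⟩)
      · intro h
        refine hf (Set.mem_iUnion.2 ⟨k, Or.inr ?_⟩)
        simp only [Set.mem_singleton_iff]
        linarith
    have hae : {f : ℝ | f ∈ Set.Icc (-(θ / 2)) (θ / 2) ∧
        ({k : ℤ | |f - k * θ| < 1 / 2}.ncard : ℤ) = ⌊1 / θ⌋ + 1}
        =ᵐ[volume] (Set.Icc (-(θ / 2)) (θ / 2) ∩ B : Set ℝ) := by
      rw [MeasureTheory.ae_eq_set]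
      constructor
      · refine measure_mono_null (fun f hf => ?_) hCnull
        by_contra hfC
        obtain ⟨⟨hficc, hfcnt⟩, hfnot⟩ := hf
        exact hfnot ⟨hficc, (mem_iff_count θ hθ f (hbdd f hfC)).1 hfcnt⟩
      · refine measure_mono_null (fun f hf => ?_) hCnull
        by_contra hfC
        obtain ⟨⟨hficc, hfB⟩, hfnot⟩ := hf
        exact hfnot ⟨hficc, (mem_iff_count θ hθ f (hbdd f hfC)).2 hfB⟩
    rw [measure_congr hae]
    have hae2 : (Set.Icc (-(θ / 2)) (θ / 2) ∩ B : Set ℝ)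
        =ᵐ[volume] (B ∩ Set.Ioc (-(θ / 2)) (-(θ / 2) + θ) : Set ℝ) := by
      rw [MeasureTheory.ae_eq_set]
      constructor
      · refine measure_mono_null (fun f hf => ?_) (measure_singleton (-(θ / 2)))
        obtain ⟨⟨hf1, hfB⟩, hf2⟩ := hf
        simp only [Set.mem_singleton_iff]
        rcases lt_or_eq_of_le hf1.1 with h | h
        · exact absurd ⟨hfB, h, by linarith [hf1.2]⟩ hf2
        · exact h.symm
      · refine measure_mono_null (fun f hf => ?_) (measure_empty (μ := volume))
        obtain ⟨⟨hfB, hf1⟩, hf2⟩ := hf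
        exact absurd ⟨⟨hf1.1.le, by linarith [hf1.2]⟩, hfB⟩ hf2
    rw [measure_congr hae2]
    have hBmeas : MeasurableSet B := MeasurableSet.iUnion fun m => measurableSet_Ioo
    have hBinv : ∀ g : AddSubgroup.zmultiples θ, (fun x : ℝ => g +ᵥ x) ⁻¹' B = B := by
      intro g
      obtain ⟨n, hn⟩ := g.2
      have key : ∀ x : ℝ, (g +ᵥ x : ℝ) = (n : ℝ) * θ + x := by
        intro x
        have hg : (g : ℝ) = (n : ℝ) * θ := by rw [← hn]; simp [zsmul_eq_mul]
        rw [AddSubgroup.vadd_def, vadd_eq_add, hg]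
      ext x
      simp only [Set.mem_preimage, hB, Set.mem_iUnion, Set.mem_Ioo, key x]
      constructor
      · rintro ⟨m, h1, h2⟩
        exact ⟨m - n, by push_cast; constructor <;> linarith⟩
      · rintro ⟨m, h1, h2⟩
        exact ⟨m + n, by push_cast; constructor <;> linarith⟩
    have hfd1 := isAddFundamentalDomain_Ioc hθ (-(θ / 2)) volume
    have hfd2 := isAddFundamentalDomain_Ioc hθ (1 / 2 - θ) volume
    have hkey := hfd1.measure_set_eq hfd2 hBmeas hBinv
    rw [hkey]
    have hset : B ∩ Set.Ioc (1 / 2 - θ) (1 / 2 - θ + θ)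
        = Set.Ioo (1 / 2 - (1 - (⌊1 / θ⌋ : ℝ) * θ)) (1 / 2) := by
      have he : (1 / 2 - θ + θ : ℝ) = 1 / 2 := by ring
      rw [he]
      ext f
      simp only [hB, Set.mem_inter_iff, Set.mem_iUnion, Set.mem_Ioo, Set.mem_Ioc]
      constructor
      · rintro ⟨⟨m, h1, h2⟩, h3, h4⟩
        have hm0 : m = 0 := by
          by_contra hm
          rcases lt_or_gt_of_ne hm with h | h
          · have hmr : (m : ℝ) ≤ -1 := by exact_mod_cast (by omega : m ≤ -1)
            nlinarith
          · have hmr : (1 : ℝ) ≤ (m : ℝ) := by exact_mod_cast (by omega : 1 ≤ m)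
            nlinarith
        subst hm0
        push_cast at h1 h2
        constructor <;> linarith
      · rintro ⟨h1, h2⟩
        refine ⟨⟨0, ?_, ?_⟩, ?_, ?_⟩ <;> push_cast <;> linarith
    rw [hset, Real.volume_Ioo]
    congr 1
    ring
end

section
/- Let sinc(x) = sin(πx)/(πx) for x ≠ 0 and sinc(0) = 1, let θ > 0, and for f ∈ ℝ define N_θ(f) = #{k ∈ ℤ : |f − kθ| < 1/2}. Then for every f ∈ ℝ such that f − kθ ∉ {−1/2, 1/2} for all k ∈ ℤ, the symmetric partial sums converge: lim_{M→∞} Σ_{ℓ=−M}^{M} sinc(ℓ/θ) · exp(2πi·ℓ·f/θ) = θ · N_θ(f). -/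
/-!
Pairing the terms `±ℓ` and using
`sinc u · 2 cos (2πuf) = (sin (2πu(f + 1/2)) - sin (2πu(f - 1/2))) / (πu)`
turns the partial sums into `1 + (θ/π) ∑_{n ≤ M} (sin (2πnb) - sin (2πna)) / n`
with `a, b = (f ∓ 1/2) / θ`. For `x ∉ ℤ` the sawtooth series `∑ sin (2πnx) / n` is the
imaginary part of `∑ zⁿ / n` at `z = e^{2πix}`; it converges by Dirichlet's test, Abel's
theorem identifies its sum with `-log (1 - z)`, and `1 - e^{2iψ} = 2 sin ψ · e^{i(ψ - π/2)}`
gives `π/2 - π·{x}`. The limit `1 + θ ({a} - {b})` is `θ (⌊b⌋ - ⌊a⌋)`, and `⌊b⌋ - ⌊a⌋`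
counts the integers `k` in `(a, b)`, i.e. those with `|f - kθ| < 1/2`.
-/

open Real MeasureTheory Filter

noncomputable def sinc (x : ℝ) : ℝ := if x = 0 then 1 else Real.sin (π * x) / (π * x)

open Complex Topology

namespace Complex

open scoped ComplexOrder in
lemma one_sub_mem_slitPlane {z : ℂ} (hz : ‖z‖ ≤ 1) (h1 : z ≠ 1) :
    1 - z ∈ slitPlane := by
  rw [mem_slitPlane_iff_not_le_zero, sub_nonpos]
  intro h
  obtain ⟨hre, him⟩ := le_def.1 h
  have : z.re ≤ 1 := (re_le_norm z).trans hz
  exact h1 (ext (by rw [one_re] at hre ⊢; linarith) (by simpa using him.symm))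

lemma norm_sum_range_pow_succ_le {z : ℂ} (hz : ‖z‖ ≤ 1) (h1 : z ≠ 1) (n : ℕ) :
    ‖∑ i ∈ Finset.range n, z ^ (i + 1)‖ ≤ 2 / ‖z - 1‖ := by
  have hgeom : ∑ i ∈ Finset.range n, z ^ (i + 1) = z * ((z ^ n - 1) / (z - 1)) := by
    simp only [pow_succ', ← Finset.mul_sum, geom_sum_eq h1]
  rw [hgeom, norm_mul, norm_div]
  have hpow : ‖z ^ n - 1‖ ≤ 2 := by
    calc ‖z ^ n - 1‖ ≤ ‖z‖ ^ n + 1 := by simpa using norm_sub_le (z ^ n) 1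
      _ ≤ 2 := by linarith [pow_le_one₀ (norm_nonneg z) hz (n := n)]
  calc ‖z‖ * (‖z ^ n - 1‖ / ‖z - 1‖) ≤ 1 * (2 / ‖z - 1‖) := by gcongr
    _ = 2 / ‖z - 1‖ := one_mul _

lemma cauchySeq_sum_range_pow_succ_div {z : ℂ} (hz : ‖z‖ ≤ 1) (h1 : z ≠ 1) :
    CauchySeq fun M : ℕ ↦ ∑ n ∈ Finset.range M, z ^ (n + 1) / (n + 1) := by
  have hanti : Antitone fun n : ℕ ↦ 1 / ((n : ℝ) + 1) := fun m n h ↦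
    one_div_le_one_div_of_le (by positivity) (by gcongr)
  have := hanti.cauchySeq_series_mul_of_tendsto_zero_of_bounded
    tendsto_one_div_add_atTop_nhds_zero_nat (norm_sum_range_pow_succ_le hz h1)
  convert this using 3 with M n
  rw [real_smul, div_eq_inv_mul, one_div]
  push_cast
  rfl

lemma tendsto_sum_range_pow_succ_div {z : ℂ} (hz : ‖z‖ ≤ 1) (h1 : z ≠ 1) :
    Tendsto (fun M : ℕ ↦ ∑ n ∈ Finset.range M, z ^ (n + 1) / (n + 1)) atTop
      (𝓝 (-log (1 - z))) := by
  obtain ⟨l, hl⟩ := cauchySeq_tendsto_of_complete (cauchySeq_sum_range_pow_succ_div hz h1)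
  have hl₀ : Tendsto (fun M : ℕ ↦ ∑ n ∈ Finset.range M, z ^ n / n) atTop (𝓝 l) := by
    rw [← tendsto_add_atTop_iff_nat 1]
    simpa [Finset.sum_range_succ'] using hl
  have htaylor : ∀ᶠ w in (𝓝[<] (1 : ℝ)).map ofReal,
      ∑' n : ℕ, z ^ n / n * w ^ n = -log (1 - w * z) := by
    rw [eventually_map]
    filter_upwards [Ioo_mem_nhdsLT zero_lt_one] with x hx
    have hxz : ‖(x : ℂ) * z‖ < 1 := by
      rw [norm_mul, norm_real, Real.norm_of_nonneg hx.1.le]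
      exact (mul_le_of_le_one_right hx.1.le hz).trans_lt hx.2
    simp_rw [div_mul_eq_mul_div, ← mul_pow, mul_comm z]
    exact (hasSum_taylorSeries_neg_log hxz).tsum_eq
  have hcont : ContinuousAt (fun w : ℂ ↦ -log (1 - w * z)) 1 :=
    ((continuousAt_clog (by simpa using one_sub_mem_slitPlane hz h1)).comp (by fun_prop)).neg
  have hofReal : Tendsto ofReal (𝓝[<] (1 : ℝ)) (𝓝 1) := by
    simpa using (continuous_ofReal.tendsto 1).mono_left nhdsWithin_le_nhds
  have habel := (tendsto_tsum_powerSeries_nhdsWithin_lt hl₀).congr' htaylor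
  rwa [tendsto_nhds_unique habel (tendsto_map'_iff.2 (by simpa using hcont.tendsto.comp hofReal))]
    at hl

lemma one_sub_exp_two_mul_ofReal_mul_I (ψ : ℝ) :
    1 - exp ((2 * ψ : ℝ) * I) = (2 * Real.sin ψ : ℝ) * exp ((ψ - π / 2 : ℝ) * I) := by
  apply Complex.ext <;>
  simp only [sub_re, sub_im, one_re, one_im, exp_ofReal_mul_I_re, exp_ofReal_mul_I_im,
    re_ofReal_mul, im_ofReal_mul, Real.cos_sub_pi_div_two, Real.sin_sub_pi_div_two,
    Real.cos_two_mul, Real.sin_two_mul] <;>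
  nlinarith [Real.sin_sq_add_cos_sq ψ]

lemma arg_one_sub_exp_two_pi_mul_I {t : ℝ} (ht₀ : 0 < t) (ht₁ : t < 1) :
    arg (1 - exp ((2 * π * t : ℝ) * I)) = π * t - π / 2 := by
  have hsin : 0 < Real.sin (π * t) :=
    Real.sin_pos_of_pos_of_lt_pi (by positivity) (by nlinarith [Real.pi_pos])
  rw [mul_assoc, one_sub_exp_two_mul_ofReal_mul_I, arg_real_mul _ (by positivity), exp_mul_I,
    arg_cos_add_sin_mul_I]
  constructor <;> nlinarith [Real.pi_pos]

end Complex

lemma Real.tendsto_sum_range_sin_div {x : ℝ} (hx : ∀ k : ℤ, x ≠ k) :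
    Tendsto (fun M : ℕ ↦ ∑ n ∈ Finset.range M, Real.sin (2 * π * (n + 1) * x) / (n + 1))
      atTop (𝓝 (π / 2 - π * Int.fract x)) := by
  have hz₁ : Complex.exp ((2 * π * x : ℝ) * I) ≠ 1 := by
    rw [Ne, Complex.exp_eq_one_iff]
    rintro ⟨k, hk⟩
    have : ((2 * π * x : ℝ) : ℂ) = (2 * π * k : ℝ) :=
      mul_right_cancel₀ I_ne_zero (by rw [hk]; push_cast; ring)
    exact hx k (mul_left_cancel₀ Real.two_pi_pos.ne' (ofReal_injective this))
  have hz_fract :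
      Complex.exp ((2 * π * x : ℝ) * I) = Complex.exp ((2 * π * Int.fract x : ℝ) * I) := by
    refine Complex.exp_eq_exp_iff_exists_int.2 ⟨⌊x⌋, ?_⟩
    rw [Int.fract]
    push_cast
    ring
  have hpow (n : ℕ) : Complex.exp ((2 * π * x : ℝ) * I) ^ (n + 1)
      = Complex.exp ((2 * π * (n + 1) * x : ℝ) * I) := by
    rw [← Complex.exp_nat_mul]
    push_cast
    ring_nf
  have him := (continuous_im.tendsto _).comp
    (tendsto_sum_range_pow_succ_div (norm_exp_ofReal_mul_I _).le hz₁)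
  convert him using 1
  · ext M
    simp only [Function.comp_apply, im_sum, hpow, ← Nat.cast_succ, div_natCast_im,
      exp_ofReal_mul_I_im]
  · rw [neg_im, log_im, hz_fract,
      arg_one_sub_exp_two_pi_mul_I (Int.fract_pos.2 (hx ⌊x⌋)) (Int.fract_lt_one x)]
    congr 1
    ring

-- Mathlib's `Real.sinc` is the unnormalized `sin x / x`.
lemma sinc_eq_sinc_pi_mul (x : ℝ) : _root_.sinc x = Real.sinc (π * x) := by
  simp [_root_.sinc, Real.sinc, Real.pi_ne_zero]

lemma sinc_mul_two_cos {u : ℝ} (hu : u ≠ 0) (f : ℝ) :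
    _root_.sinc u * (2 * Real.cos (2 * π * u * f))
      = (Real.sin (2 * π * u * (f + 1 / 2)) - Real.sin (2 * π * u * (f - 1 / 2))) / (π * u) := by
  have hsum : 2 * π * u * (f + 1 / 2) = 2 * π * u * f + π * u := by ring
  have hdiff : 2 * π * u * (f - 1 / 2) = 2 * π * u * f - π * u := by ring
  rw [hsum, hdiff, Real.sin_add, Real.sin_sub, _root_.sinc, if_neg hu]
  ring

lemma sinc_mul_exp_add_sinc_neg_mul_exp (u f : ℝ) :
    (_root_.sinc u : ℂ) * Complex.exp (2 * π * I * u * f)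
      + (_root_.sinc (-u) : ℂ) * Complex.exp (2 * π * I * (-u : ℝ) * f)
      = ((_root_.sinc u * (2 * Real.cos (2 * π * u * f)) : ℝ) : ℂ) := by
  rw [sinc_eq_sinc_pi_mul (-u), mul_neg, Real.sinc_neg, ← sinc_eq_sinc_pi_mul]
  push_cast
  rw [two_cos]
  ring_nf

noncomputable def sincTerm (θ f : ℝ) (ℓ : ℤ) : ℂ :=
  (_root_.sinc ((ℓ : ℝ) / θ) : ℂ) * Complex.exp (2 * π * I * ℓ * f / θ)

lemma sincTerm_zero (θ f : ℝ) : sincTerm θ f 0 = 1 := by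
  simp [sincTerm, _root_.sinc]

lemma sincTerm_add_sincTerm_neg {θ : ℝ} (hθ : θ ≠ 0) (f : ℝ) (n : ℕ) :
    sincTerm θ f (n + 1) + sincTerm θ f (-(n + 1))
      = ((θ / π * (Real.sin (2 * π * (n + 1) * ((f + 1 / 2) / θ)) / (n + 1)
          - Real.sin (2 * π * (n + 1) * ((f - 1 / 2) / θ)) / (n + 1)) : ℝ) : ℂ) := by
  have hu : ((n : ℝ) + 1) / θ ≠ 0 := div_ne_zero (by positivity) hθ
  convert sinc_mul_exp_add_sinc_neg_mul_exp (((n : ℝ) + 1) / θ) f using 2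
  · simp only [sincTerm]
    push_cast
    ring_nf
  · simp only [sincTerm]
    push_cast
    ring_nf
  · rw [sinc_mul_two_cos hu]
    field_simp

lemma Finset.sum_Icc_neg_natCast_eq {α : Type*} [AddCommMonoid α] (g : ℤ → α) (M : ℕ) :
    ∑ ℓ ∈ Finset.Icc (-(M : ℤ)) M, g ℓ
      = g 0 + ∑ n ∈ Finset.range M, (g (n + 1) + g (-(n + 1))) := by
  induction M with
  | zero => simp
  | succ M ih =>
    rw [Finset.sum_range_succ, Nat.cast_succ, Finset.Icc_succ_succ, Finset.sum_union (by simp),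
      Finset.sum_pair (by omega), ih]
    abel

lemma ncard_setOf_lt_intCast_lt {a b : ℝ} (hab : a ≤ b) (hb : ∀ k : ℤ, b ≠ k) :
    ({k : ℤ | a < k ∧ (k : ℝ) < b}.ncard : ℝ) = ⌊b⌋ - ⌊a⌋ := by
  have hset : {k : ℤ | a < k ∧ (k : ℝ) < b} = Finset.Ioc ⌊a⌋ ⌊b⌋ := by
    ext k
    simp only [Set.mem_ofPred_eq, Finset.coe_Ioc, Set.mem_Ioc, Int.floor_lt, Int.le_floor]
    exact and_congr_right fun _ ↦ (le_iff_lt_or_eq.trans (or_iff_left (hb k).symm)).symm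
  rw [hset, Set.ncard_coe_finset, Int.card_Ioc, ← Int.cast_natCast,
    Int.toNat_of_nonneg (sub_nonneg.2 (Int.floor_le_floor hab)), Int.cast_sub]

lemma setOf_abs_sub_int_mul_lt {θ : ℝ} (hθ : 0 < θ) (f c : ℝ) :
    {k : ℤ | |f - k * θ| < c} = {k : ℤ | (f - c) / θ < k ∧ (k : ℝ) < (f + c) / θ} := by
  ext k
  simp only [Set.mem_ofPred_eq, abs_sub_lt_iff, div_lt_iff₀ hθ, lt_div_iff₀ hθ]
  constructor <;> rintro ⟨h₁, h₂⟩ <;> constructor <;> linarith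

/-- Poisson-summation identity (Eq. (15) of the paper): the symmetric partial sums of the
Fourier series of the sampled sinc taps converge to the θ-periodized rectangular
function `θ · N_θ(f)`, where `N_θ(f) = #{k ∈ ℤ : |f - kθ| < 1/2}`. -/
theorem sampled_sinc_poisson (θ : ℝ) (hθ : 0 < θ) (f : ℝ)
    (hf : ∀ k : ℤ, f - k * θ ≠ -(1 / 2) ∧ f - k * θ ≠ 1 / 2) :
    Tendsto (fun M : ℕ => ∑ ℓ ∈ Finset.Icc (-(M : ℤ)) (M : ℤ),
        (_root_.sinc ((ℓ : ℝ) / θ) : ℂ) * Complex.exp (2 * π * Complex.I * (ℓ : ℂ) * (f : ℂ) / (θ : ℂ)))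
      atTop
      (nhds ((θ : ℂ) * (({k : ℤ | |f - k * θ| < 1 / 2}.ncard : ℕ) : ℂ))) := by
  set a := (f - 1 / 2) / θ with ha_def
  set b := (f + 1 / 2) / θ with hb_def
  have ha : ∀ k : ℤ, a ≠ k := fun k h ↦
    (hf k).2 (by rw [ha_def, div_eq_iff hθ.ne'] at h; linarith)
  have hb : ∀ k : ℤ, b ≠ k := fun k h ↦
    (hf k).1 (by rw [hb_def, div_eq_iff hθ.ne'] at h; linarith)
  have hlim : 1 + θ / π * ((π / 2 - π * Int.fract b) - (π / 2 - π * Int.fract a))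
      = θ * ({k : ℤ | |f - k * θ| < 1 / 2}.ncard : ℝ) := by
    rw [setOf_abs_sub_int_mul_lt hθ, ncard_setOf_lt_intCast_lt
      ((div_le_div_iff_of_pos_right hθ).2 (by linarith)) hb, Int.fract, Int.fract, ha_def, hb_def]
    field_simp
    ring
  have hsaw := ((Real.tendsto_sum_range_sin_div hb).sub
    (Real.tendsto_sum_range_sin_div ha)).const_mul (θ / π)
  change Tendsto (fun M : ℕ ↦ ∑ ℓ ∈ Finset.Icc (-(M : ℤ)) M, sincTerm θ f ℓ) _ _
  simp_rw [Finset.sum_Icc_neg_natCast_eq, sincTerm_zero, sincTerm_add_sincTerm_neg hθ.ne',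
    ← ha_def, ← hb_def]
  convert (hsaw.const_add 1).ofReal using 2 with M
  · simp [Finset.mul_sum, Finset.sum_sub_distrib, mul_sub]
  · rw [hlim]
    push_cast
    ring
end

section
/- Let λ > 0, Δx > 0, P̄ > 0, ν > 0 and N0 > 0 be real numbers. Set θ = λ/(2Δx), P = Δx·P̄, β = ⌊1/θ⌋, α = 1/θ − β, and for f ∈ ℝ let N_θ(f) = #{k ∈ ℤ : |f − kθ| < 1/2}. Then (1/θ) · ∫_{−θ/2}^{θ/2} log( 1 + (Pν/N0)·θ·N_θ(f) ) df = α·log( 1 + (β+1)·λ·P̄·ν/(2N0) ) + (1−α)·log( 1 + β·λ·P̄·ν/(2N0) ). -/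
open Real MeasureTheory

/-!
The integers `k` with `|f - kθ| < w/2` are those of the open interval
`((f - w/2)/θ, (f + w/2)/θ)`, of length `w/θ = β + α`. Their number is `θ`-periodic in `f`,
so the integral over `[-θ/2, θ/2]` may be taken over `(w/2, w/2 + θ)` instead. There the lower
endpoint lies in `(0, 1)`, and the count is `β` on the first `(1 - α)θ` of the period and
`β + 1` on the last `αθ`.
-/

open Set in
lemma intervalIntegrable_and_integral_eq_of_eqOn_Ioo {g : ℝ → ℝ} {p q E : ℝ} (hpq : p ≤ q)
    (hg : EqOn g (fun _ => E) (Ioo p q)) :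
    IntervalIntegrable g volume p q ∧ ∫ x in p..q, g x = (q - p) * E := by
  refine ⟨(intervalIntegrable_iff_integrableOn_Ioo_of_le hpq).2 ?_, ?_⟩
  · exact (integrableOn_congr_fun hg measurableSet_Ioo).2 (integrableOn_const measure_Ioo_lt_top.ne)
  · rw [intervalIntegral.integral_of_le hpq, integral_Ioc_eq_integral_Ioo,
      setIntegral_congr_fun measurableSet_Ioo hg, setIntegral_const, Real.volume_real_Ioo_of_le hpq,
      smul_eq_mul]

lemma setOf_abs_sub_mul_lt_eq_Ioo {θ : ℝ} (hθ : 0 < θ) (w f : ℝ) :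
    {k : ℤ | |f - k * θ| < w / 2} = ↑(Finset.Ioo ⌊(f - w / 2) / θ⌋ ⌈(f + w / 2) / θ⌉) := by
  ext k
  simp only [Set.mem_ofPred_eq, Finset.coe_Ioo, Set.mem_Ioo, abs_lt, Int.floor_lt,
    Int.lt_ceil, div_lt_iff₀ hθ, lt_div_iff₀ hθ]
  constructor <;> rintro ⟨h1, h2⟩ <;> constructor <;> linarith

lemma ncard_setOf_abs_add_sub_mul_lt (θ r f : ℝ) :
    {k : ℤ | |f + θ - k * θ| < r}.ncard = {k : ℤ | |f - k * θ| < r}.ncard := by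
  have : {k : ℤ | |f + θ - k * θ| < r} = (· + 1) '' {k : ℤ | |f - k * θ| < r} := by
    ext k
    rw [Set.image_add_right, Set.mem_preimage, Set.mem_ofPred_eq, Set.mem_ofPred_eq]
    push_cast
    ring_nf
  rw [this, Set.ncard_image_of_injective _ (add_left_injective 1)]

lemma ncard_setOf_abs_sub_mul_lt_of_mem_Ioo {θ w f : ℝ} (hθ : 0 < θ) (hw : 0 ≤ w)
    (hf : f ∈ Set.Ioo (w / 2) (w / 2 + θ)) :
    ({k : ℤ | |f - k * θ| < w / 2}.ncard : ℝ) =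
      ⌊w / θ⌋ + ⌈(f - w / 2) / θ + Int.fract (w / θ)⌉ - 1 := by
  have hfloor : ⌊(f - w / 2) / θ⌋ = 0 := by
    rw [Int.floor_eq_zero_iff, Set.mem_Ico, le_div_iff₀ hθ, div_lt_iff₀ hθ]
    constructor <;> linarith [hf.1, hf.2]
  have hceil : ⌈(f + w / 2) / θ⌉ = ⌈(f - w / 2) / θ + Int.fract (w / θ)⌉ + ⌊w / θ⌋ := by
    rw [← Int.ceil_add_intCast, add_assoc, Int.fract_add_floor]
    congr 1
    field_simp
    ring
  have hpos : 0 < ⌈(f - w / 2) / θ + Int.fract (w / θ)⌉ :=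
    Int.ceil_pos.2 (add_pos_of_pos_of_nonneg (div_pos (sub_pos.2 hf.1) hθ) (Int.fract_nonneg _))
  have hT : 0 ≤ ⌊w / θ⌋ := Int.floor_nonneg.2 (div_nonneg hw hθ.le)
  rw [setOf_abs_sub_mul_lt_eq_Ioo hθ, Set.ncard_coe_finset, Int.card_Ioo, hfloor, hceil,
    ← Int.cast_natCast, Int.toNat_of_nonneg (by omega)]
  push_cast
  ring

lemma ncard_setOf_abs_sub_mul_lt_eq_floor {θ w f : ℝ} (hθ : 0 < θ) (hw : 0 ≤ w)
    (hf : f ∈ Set.Ioo (w / 2) (w / 2 + θ * (1 - Int.fract (w / θ)))) :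
    ({k : ℤ | |f - k * θ| < w / 2}.ncard : ℝ) = ⌊w / θ⌋ := by
  have hα := Int.fract_lt_one (w / θ)
  have hf' : f ∈ Set.Ioo (w / 2) (w / 2 + θ) :=
    ⟨hf.1, hf.2.trans_le (by nlinarith [Int.fract_nonneg (w / θ)])⟩
  have hceil : ⌈(f - w / 2) / θ + Int.fract (w / θ)⌉ = 1 := by
    rw [Int.ceil_eq_iff, div_add' _ _ _ hθ.ne', lt_div_iff₀ hθ, div_le_iff₀ hθ]
    push_cast
    constructor <;> nlinarith [hf.1, hf.2, Int.fract_nonneg (w / θ)]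
  rw [ncard_setOf_abs_sub_mul_lt_of_mem_Ioo hθ hw hf', hceil]
  push_cast
  ring

lemma ncard_setOf_abs_sub_mul_lt_eq_floor_add_one {θ w f : ℝ} (hθ : 0 < θ) (hw : 0 ≤ w)
    (hf : f ∈ Set.Ioo (w / 2 + θ * (1 - Int.fract (w / θ))) (w / 2 + θ)) :
    ({k : ℤ | |f - k * θ| < w / 2}.ncard : ℝ) = ⌊w / θ⌋ + 1 := by
  have hα := Int.fract_lt_one (w / θ)
  have hf' : f ∈ Set.Ioo (w / 2) (w / 2 + θ) :=
    ⟨(by nlinarith : w / 2 ≤ w / 2 + θ * (1 - Int.fract (w / θ))).trans_lt hf.1, hf.2⟩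
  have hceil : ⌈(f - w / 2) / θ + Int.fract (w / θ)⌉ = 2 := by
    rw [Int.ceil_eq_iff, div_add' _ _ _ hθ.ne', lt_div_iff₀ hθ, div_le_iff₀ hθ]
    push_cast
    constructor <;> nlinarith [hf.1, hf.2, Int.fract_nonneg (w / θ)]
  rw [ncard_setOf_abs_sub_mul_lt_of_mem_Ioo hθ hw hf', hceil]
  push_cast
  ring

lemma integral_comp_ncard_setOf_abs_sub_mul_lt (φ : ℝ → ℝ) {θ w : ℝ} (hθ : 0 < θ) (hw : 0 ≤ w)
    (t : ℝ) :
    ∫ f in t..t + θ, φ ({k : ℤ | |f - k * θ| < w / 2}.ncard) =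
      θ * (Int.fract (w / θ) * φ (⌊w / θ⌋ + 1) + (1 - Int.fract (w / θ)) * φ ⌊w / θ⌋) := by
  have hα := Int.fract_lt_one (w / θ)
  have hα₀ := Int.fract_nonneg (w / θ)
  have hper : Function.Periodic (fun f => φ ({k : ℤ | |f - k * θ| < w / 2}.ncard)) θ :=
    fun f => by simp only [ncard_setOf_abs_add_sub_mul_lt]
  obtain ⟨hint₁, hlow⟩ := intervalIntegrable_and_integral_eq_of_eqOn_Ioo
    (g := fun f => φ ({k : ℤ | |f - k * θ| < w / 2}.ncard)) (E := φ ⌊w / θ⌋)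
    (by nlinarith : w / 2 ≤ w / 2 + θ * (1 - Int.fract (w / θ)))
    fun f hf => by simp only [ncard_setOf_abs_sub_mul_lt_eq_floor hθ hw hf]
  obtain ⟨hint₂, hhigh⟩ := intervalIntegrable_and_integral_eq_of_eqOn_Ioo
    (g := fun f => φ ({k : ℤ | |f - k * θ| < w / 2}.ncard)) (E := φ (⌊w / θ⌋ + 1))
    (by nlinarith : w / 2 + θ * (1 - Int.fract (w / θ)) ≤ w / 2 + θ)
    fun f hf => by simp only [ncard_setOf_abs_sub_mul_lt_eq_floor_add_one hθ hw hf]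
  rw [hper.intervalIntegral_add_eq t (w / 2),
    ← intervalIntegral.integral_add_adjacent_intervals hint₁ hint₂, hlow, hhigh]
  ring

theorem capacity_optimal_receiver_1D_general (lam Δx Pbar ν N0 : ℝ)
    (hlam : 0 < lam) (hΔx : 0 < Δx) :
    let θ := lam / (2 * Δx)
    let P := Δx * Pbar
    let β : ℝ := (⌊1 / θ⌋ : ℝ)
    let α : ℝ := 1 / θ - β
    (1 / θ) * (∫ f in (-(θ / 2))..(θ / 2),
        Real.log (1 + (P * ν / N0) * θ * (({k : ℤ | |f - k * θ| < 1 / 2}.ncard : ℕ) : ℝ)))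
      = α * Real.log (1 + (β + 1) * lam * Pbar * ν / (2 * N0))
        + (1 - α) * Real.log (1 + β * lam * Pbar * ν / (2 * N0)) := by
  intro θ P β α
  have hθ : 0 < θ := by positivity
  have hint := integral_comp_ncard_setOf_abs_sub_mul_lt
    (fun n => Real.log (1 + (P * ν / N0) * θ * n)) hθ zero_le_one (-(θ / 2))
  rw [neg_add_eq_sub, sub_half] at hint
  have hSNR (n : ℝ) : (P * ν / N0) * θ * n = n * lam * Pbar * ν / (2 * N0) := by
    simp only [P, θ]
    field_simp
  rw [hint, ← mul_assoc, one_div_mul_cancel hθ.ne', one_mul, hSNR, hSNR]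
  rfl

/-- Property 1 of the paper: closed form for the per-terminal capacity of the optimal
receiver in the one-dimensional deployment. Here `θ = λ/(2Δx)`, `P = Δx·P̄`,
`β = ⌊1/θ⌋`, `α = 1/θ - β`, and `N_θ(f) = #{k ∈ ℤ : |f - kθ| < 1/2}` gives the folded
spectrum `G(f) = θPν·N_θ(f)` on `[-θ/2, θ/2]`. -/
theorem capacity_optimal_receiver_1D (lam Δx Pbar ν N0 : ℝ)
    (hlam : 0 < lam) (hΔx : 0 < Δx) (hP : 0 < Pbar) (hν : 0 < ν) (hN0 : 0 < N0) :
    let θ := lam / (2 * Δx)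
    let P := Δx * Pbar
    let β : ℝ := (⌊1 / θ⌋ : ℝ)
    let α : ℝ := 1 / θ - β
    (1 / θ) * (∫ f in (-(θ / 2))..(θ / 2),
        Real.log (1 + (P * ν / N0) * θ * (({k : ℤ | |f - k * θ| < 1 / 2}.ncard : ℕ) : ℝ)))
      = α * Real.log (1 + (β + 1) * lam * Pbar * ν / (2 * N0))
        + (1 - α) * Real.log (1 + β * lam * Pbar * ν / (2 * N0)) :=
  capacity_optimal_receiver_1D_general lam Δx Pbar ν N0 hlam hΔx
end

section
/- Let λ > 0, Δx > 0, P̄ > 0, ν > 0 and N0 > 0 be real numbers, set θ = λ/(2Δx) and P = Δx·P̄, and for f ∈ ℝ let N_θ(f) = #{k ∈ ℤ : |f − kθ| < 1/2}. If 1/θ is a positive integer, then (1/θ) · ∫_{−θ/2}^{θ/2} log( 1 + (Pν/N0)·θ·N_θ(f) ) df = log( 1 + Pν/N0 ). -/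
open Real MeasureTheory

/-! When `n * θ = 1`, the condition `|f - k * θ| < 1 / 2` places the integer `k` in an open interval
of length `n`, which contains exactly `n` integers unless its endpoints are integers. Hence
`θ * N_θ(f) = 1` for almost every `f`, and the integrand is the constant `log (1 + P * ν / N0)`. -/

theorem Int.ncard_setOf_mem_Ioo_add_natCast {a : ℝ} (ha : ∀ j : ℤ, (j : ℝ) ≠ a) (n : ℕ) :
    {k : ℤ | a < k ∧ (k : ℝ) < a + n}.ncard = n := by
  have hset : {k : ℤ | a < k ∧ (k : ℝ) < a + n} = ↑(Finset.Ioc ⌊a⌋ (⌊a⌋ + n)) := by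
    ext k
    have hupper : (k : ℝ) < a + n ↔ k ≤ ⌊a⌋ + n := by
      rw [← sub_le_iff_le_add, Int.le_floor, ← sub_lt_iff_lt_add, lt_iff_le_and_ne]
      push_cast
      exact and_iff_left fun h => ha (k - n) (by push_cast; exact h)
    simp only [Set.mem_ofPred_eq, Finset.coe_Ioc, Set.mem_Ioc, Int.floor_lt, hupper]
  rw [hset, Set.ncard_coe_finset, Int.card_Ioc, add_sub_cancel_left, Int.toNat_natCast]

theorem ncard_setOf_abs_sub_int_mul_lt {θ r f : ℝ} {m : ℕ} (hθ : 0 < θ) (hm : m * θ = 2 * r)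
    (hf : ∀ j : ℤ, f ≠ r + j * θ) :
    {k : ℤ | |f - k * θ| < r}.ncard = m := by
  have hcenter : ∀ j : ℤ, (j : ℝ) ≠ (f - r) / θ := fun j hj =>
    hf j (by rw [hj]; field_simp; ring)
  have hright : (f - r) / θ + m = (f + r) / θ := by field_simp; linarith
  rw [← Int.ncard_setOf_mem_Ioo_add_natCast hcenter m, hright]
  congr 1; ext k
  rw [Set.mem_ofPred_eq, Set.mem_ofPred_eq, abs_sub_lt_iff, div_lt_iff₀ hθ, lt_div_iff₀ hθ]
  constructor <;> rintro ⟨h₁, h₂⟩ <;> constructor <;> linarith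

theorem ae_ncard_setOf_abs_sub_int_mul_lt {θ r : ℝ} {m : ℕ} (hθ : 0 < θ) (hm : m * θ = 2 * r) :
    ∀ᵐ f, {k : ℤ | |f - k * θ| < r}.ncard = m := by
  filter_upwards [(Set.countable_range fun j : ℤ => r + j * θ).ae_notMem volume] with f hf
  exact ncard_setOf_abs_sub_int_mul_lt hθ hm fun j hj => hf ⟨j, hj.symm⟩

theorem capacity_interference_free_1D_general (lam Δx Pbar ν N0 : ℝ)
    (hint : ∃ n : ℕ, 0 < n ∧ 1 / (lam / (2 * Δx)) = (n : ℝ)) :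
    let θ := lam / (2 * Δx)
    let P := Δx * Pbar
    (1 / θ) * (∫ f in (-(θ / 2))..(θ / 2),
        Real.log (1 + (P * ν / N0) * θ * (({k : ℤ | |f - k * θ| < 1 / 2}.ncard : ℕ) : ℝ)))
      = Real.log (1 + P * ν / N0) := by
  obtain ⟨n, hn, hθn⟩ := hint
  intro θ P
  have hθ : 0 < θ := one_div_pos.mp (hθn ▸ Nat.cast_pos.mpr hn)
  have hnθ : (n : ℝ) * θ = 1 := by rw [← hθn, one_div_mul_cancel hθ.ne']
  have hcount : ∀ᵐ f, {k : ℤ | |f - k * θ| < 1 / 2}.ncard = n :=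
    ae_ncard_setOf_abs_sub_int_mul_lt hθ (by rw [hnθ]; norm_num)
  have hintegrand : ∀ᵐ f, log (1 + P * ν / N0 * θ * ({k : ℤ | |f - k * θ| < 1 / 2}.ncard : ℕ))
      = log (1 + P * ν / N0) := by
    filter_upwards [hcount] with f hf
    rw [hf, mul_assoc, mul_comm θ, hnθ, mul_one]
  rw [intervalIntegral.integral_congr_ae (hintegrand.mono fun _ h _ => h),
    intervalIntegral.integral_const, smul_eq_mul, sub_neg_eq_add, add_halves,
    one_div, inv_mul_cancel_left₀ hθ.ne']

/-- When `1/θ` is a positive integer, the per-terminal capacity of the optimal receiver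
equals the interference-free single-terminal capacity `log(1 + Pν/N0)`
(Eq. (17) of the paper). Here `θ = λ/(2Δx)`, `P = Δx·P̄`, and
`N_θ(f) = #{k ∈ ℤ : |f - kθ| < 1/2}`. -/
theorem capacity_interference_free_1D (lam Δx Pbar ν N0 : ℝ)
    (hlam : 0 < lam) (hΔx : 0 < Δx) (hP : 0 < Pbar) (hν : 0 < ν) (hN0 : 0 < N0)
    (hint : ∃ n : ℕ, 0 < n ∧ 1 / (lam / (2 * Δx)) = (n : ℝ)) :
    let θ := lam / (2 * Δx)
    let P := Δx * Pbar
    (1 / θ) * (∫ f in (-(θ / 2))..(θ / 2),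
        Real.log (1 + (P * ν / N0) * θ * (({k : ℤ | |f - k * θ| < 1 / 2}.ncard : ℕ) : ℝ)))
      = Real.log (1 + P * ν / N0) :=
  capacity_interference_free_1D_general lam Δx Pbar ν N0 hint
end

section
/- Fix real numbers θ > 0, P̄ > 0, ν > 0 and N0 > 0, and set β = ⌊1/θ⌋ and α = 1/θ − β. Define, for λ > 0, C̄(λ) = (2θ/λ) · [ α·log( 1 + (β+1)·λ·P̄·ν/(2N0) ) + (1−α)·log( 1 + β·λ·P̄·ν/(2N0) ) ]. Then lim_{λ→0⁺} C̄(λ) = P̄·ν/N0. -/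
open Real Filter Topology

/- `C̄(λ)` is `2θ/λ` times a convex combination of `log (1 + c λ)` terms; each `log (1 + c λ) / λ`
tends to `c`, the derivative of `λ ↦ log (1 + c λ)` at `0`, and the weights are chosen so that
`α (β + 1) + (1 - α) β = α + β = 1/θ`, which turns the limit into `2θ · (1/θ) · P̄ν/(2N0)`. -/

theorem Real.tendsto_log_one_add_mul_div_self (c : ℝ) :
    Tendsto (fun x : ℝ => log (1 + c * x) / x) (𝓝[≠] 0) (𝓝 c) := by
  have hderiv : HasDerivAt (fun x : ℝ => log (1 + c * x)) c 0 := by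
    simpa using ((hasDerivAt_id (0 : ℝ)).const_mul c |>.const_add 1).log (by simp)
  simpa [div_eq_inv_mul] using hderiv.tendsto_slope_zero

theorem normalized_capacity_limit_1D_general (θ Pbar ν N0 : ℝ)
    (hθ : 0 < θ) :
    Tendsto (fun lam : ℝ =>
        (2 * θ / lam) *
          ((1 / θ - (⌊1 / θ⌋ : ℝ)) *
              Real.log (1 + ((⌊1 / θ⌋ : ℝ) + 1) * lam * Pbar * ν / (2 * N0))
            + (1 - (1 / θ - (⌊1 / θ⌋ : ℝ))) *
              Real.log (1 + (⌊1 / θ⌋ : ℝ) * lam * Pbar * ν / (2 * N0))))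
      (nhdsWithin 0 (Set.Ioi 0)) (nhds (Pbar * ν / N0)) := by
  set β : ℝ := (⌊1 / θ⌋ : ℝ)
  set α : ℝ := 1 / θ - β
  set c : ℝ := Pbar * ν / (2 * N0)
  have hlim : Tendsto (fun lam : ℝ => 2 * θ * (α * (log (1 + (β + 1) * c * lam) / lam)
        + (1 - α) * (log (1 + β * c * lam) / lam))) (𝓝[≠] 0)
      (𝓝 (2 * θ * (α * ((β + 1) * c) + (1 - α) * (β * c)))) :=
    (((tendsto_log_one_add_mul_div_self _).const_mul α).add
      ((tendsto_log_one_add_mul_div_self _).const_mul (1 - α))).const_mul (2 * θ)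
  have hvalue : 2 * θ * (α * ((β + 1) * c) + (1 - α) * (β * c)) = Pbar * ν / N0 := by
    simp only [α, c]
    field_simp
    ring
  rw [← hvalue]
  refine (hlim.mono_left (nhdsGT_le_nhdsNE 0)).congr' ?_
  filter_upwards [self_mem_nhdsWithin] with lam (hlam : 0 < lam)
  simp only [c]
  field_simp

/-- Corollary 1 of the paper: for fixed ratio `θ` between half wavelength and terminal
spacing, the space-normalized capacity `C̄(λ) = C/Δx` (with `Δx = λ/(2θ)` and `C` the
optimal-receiver capacity of Property 1) converges to `P̄ν/N0` as the wavelength `λ → 0⁺`. -/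
theorem normalized_capacity_limit_1D (θ Pbar ν N0 : ℝ)
    (hθ : 0 < θ) (hP : 0 < Pbar) (hν : 0 < ν) (hN0 : 0 < N0) :
    Tendsto (fun lam : ℝ =>
        (2 * θ / lam) *
          ((1 / θ - (⌊1 / θ⌋ : ℝ)) *
              Real.log (1 + ((⌊1 / θ⌋ : ℝ) + 1) * lam * Pbar * ν / (2 * N0))
            + (1 - (1 / θ - (⌊1 / θ⌋ : ℝ))) *
              Real.log (1 + (⌊1 / θ⌋ : ℝ) * lam * Pbar * ν / (2 * N0))))
      (nhdsWithin 0 (Set.Ioi 0)) (nhds (Pbar * ν / N0)) :=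
  normalized_capacity_limit_1D_general θ Pbar ν N0 hθ
end

section
/- Fix real numbers λ > 0, θ > 0, ν > 0 and N0 > 0, and set β = ⌊1/θ⌋ and α = 1/θ − β. Define, for P̄ > 0, C̄(P̄) = (2θ/λ) · [ α·log( 1 + (β+1)·λ·P̄·ν/(2N0) ) + (1−α)·log( 1 + β·λ·P̄·ν/(2N0) ) ]. Then lim_{P̄→∞} C̄(P̄)/log(P̄/N0) = 2/λ if θ ≥ 1, and equals 2θ/λ if 0 < θ < 1. -/
/-!
For `c > 0` the ratio `log (1 + c P) / log (P / N)` tends to `1`, since the two logarithms differ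
by `O(1)`; for `c = 0` it is `0`. The high-SNR slope of `C̄` is therefore
`(2θ/λ) (α + (1 - α) [β ≠ 0])`, and as `α = fract (1/θ)` this is `(2/λ) min θ 1`.
-/

open Real Filter Topology

/-- `C̄(P̄)`, with `β = ⌊1/θ⌋` and `α = 1/θ - β`. -/
noncomputable def spaceNormalizedCapacity (lam θ ν N0 Pbar : ℝ) : ℝ :=
  (2 * θ / lam) *
    ((1 / θ - (⌊1 / θ⌋ : ℝ)) * log (1 + ((⌊1 / θ⌋ : ℝ) + 1) * lam * Pbar * ν / (2 * N0))
      + (1 - (1 / θ - (⌊1 / θ⌋ : ℝ))) * log (1 + (⌊1 / θ⌋ : ℝ) * lam * Pbar * ν / (2 * N0)))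

theorem tendsto_log_one_add_mul_div_log_div {c N : ℝ} (hc : 0 < c) (hN : 0 < N) :
    Tendsto (fun P => log (1 + c * P) / log (P / N)) atTop (𝓝 1) := by
  have hden : Tendsto (fun P => log (P / N)) atTop atTop :=
    tendsto_log_atTop.comp (tendsto_id.atTop_div_const hN)
  have hcorr : Tendsto (fun P => log (N * (c + P⁻¹))) atTop (𝓝 (log (N * c))) := by
    refine (continuousAt_log (by positivity)).tendsto.comp ?_
    simpa using (tendsto_inv_atTop_zero.const_add c).const_mul N
  have h := (hcorr.div_atTop hden).const_add 1
  rw [add_zero] at h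
  refine h.congr' ?_
  filter_upwards [eventually_gt_atTop N] with P hNP
  have hP : 0 < P := hN.trans hNP
  have hlog : log (1 + c * P) = log (P / N) + log (N * (c + P⁻¹)) := by
    rw [← log_mul (by positivity) (by positivity)]
    congr 1
    field_simp
    ring
  rw [hlog, add_div, div_self (log_pos ((one_lt_div hN).2 hNP)).ne']

theorem tendsto_log_one_add_mul_div_log_div_of_nonneg {c N : ℝ} (hc : 0 ≤ c) (hN : 0 < N) :
    Tendsto (fun P => log (1 + c * P) / log (P / N)) atTop (𝓝 (if c = 0 then 0 else 1)) := by
  rcases hc.eq_or_lt with rfl | hc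
  · simp
  · simpa [hc.ne'] using tendsto_log_one_add_mul_div_log_div hc hN

theorem Int.fract_add_one_sub_fract_mul_ite_floor_eq_zero {x : ℝ} (hx : 0 ≤ x) :
    Int.fract x + (1 - Int.fract x) * (if (⌊x⌋ : ℝ) = 0 then 0 else 1) = min x 1 := by
  rcases lt_or_ge x 1 with hx1 | hx1
  · have hfloor : ⌊x⌋ = 0 := Int.floor_eq_zero_iff.2 ⟨hx, hx1⟩
    simp [Int.fract, hfloor, hx1.le]
  · have hfloor : (1 : ℝ) ≤ ⌊x⌋ := by exact_mod_cast Int.le_floor.2 (by simpa using hx1)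
    simp [(one_pos.trans_le hfloor).ne', hx1]

theorem tendsto_spaceNormalizedCapacity_div_log {lam θ ν N0 : ℝ}
    (hlam : 0 < lam) (hθ : 0 < θ) (hν : 0 < ν) (hN0 : 0 < N0) :
    Tendsto (fun P => spaceNormalizedCapacity lam θ ν N0 P / log (P / N0)) atTop
      (𝓝 (2 / lam * min θ 1)) := by
  set β : ℝ := (⌊1 / θ⌋ : ℝ) with hβ_def
  set snr := lam * ν / (2 * N0) with hsnr_def
  have hβ : 0 ≤ β := by positivity
  have hsnr : 0 < snr := by positivity
  have h1 := tendsto_log_one_add_mul_div_log_div (c := (β + 1) * snr) (by positivity) hN0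
  have h2 := tendsto_log_one_add_mul_div_log_div_of_nonneg (c := β * snr) (by positivity) hN0
  have h := ((h1.const_mul (1 / θ - β)).add (h2.const_mul (1 - (1 / θ - β)))).const_mul
    (2 * θ / lam)
  convert h using 1
  · have harg : ∀ k P : ℝ, k * lam * P * ν / (2 * N0) = k * snr * P := fun k P => by
      rw [hsnr_def]; ring
    ext P
    simp only [spaceNormalizedCapacity, harg, ← hβ_def]
    ring
  · congr 1
    simp only [mul_eq_zero, hsnr.ne', or_false, mul_one, hβ_def, Int.self_sub_floor,
      Int.fract_add_one_sub_fract_mul_ite_floor_eq_zero (one_div_pos.2 hθ).le]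
    rw [show 2 * θ / lam * min (1 / θ) 1 = 2 / lam * (θ * min (1 / θ) 1) by ring,
      mul_min_of_nonneg _ _ hθ.le,
      mul_one_div_cancel hθ.ne', mul_one, min_comm]

/-- Signal dimensions per meter for the optimal receiver in one dimension: the high-SNR
slope of the space-normalized capacity `C̄(P̄)` (Property 1 of the paper, divided by
`Δx = λ/(2θ)`) is `2/λ` if `θ ≥ 1` and `2θ/λ` otherwise. Here `β = ⌊1/θ⌋`, `α = 1/θ - β`. -/
theorem signal_dimensions_per_meter_1D (lam θ ν N0 : ℝ)
    (hlam : 0 < lam) (hθ : 0 < θ) (hν : 0 < ν) (hN0 : 0 < N0) :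
    (1 ≤ θ →
      Tendsto (fun Pbar : ℝ =>
          ((2 * θ / lam) *
            ((1 / θ - (⌊1 / θ⌋ : ℝ)) *
                Real.log (1 + ((⌊1 / θ⌋ : ℝ) + 1) * lam * Pbar * ν / (2 * N0))
              + (1 - (1 / θ - (⌊1 / θ⌋ : ℝ))) *
                Real.log (1 + (⌊1 / θ⌋ : ℝ) * lam * Pbar * ν / (2 * N0))))
            / Real.log (Pbar / N0))
        atTop (nhds (2 / lam))) ∧
    (θ < 1 →
      Tendsto (fun Pbar : ℝ =>
          ((2 * θ / lam) *
            ((1 / θ - (⌊1 / θ⌋ : ℝ)) *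
                Real.log (1 + ((⌊1 / θ⌋ : ℝ) + 1) * lam * Pbar * ν / (2 * N0))
              + (1 - (1 / θ - (⌊1 / θ⌋ : ℝ))) *
                Real.log (1 + (⌊1 / θ⌋ : ℝ) * lam * Pbar * ν / (2 * N0))))
            / Real.log (Pbar / N0))
        atTop (nhds (2 * θ / lam))) := by
  have h := tendsto_spaceNormalizedCapacity_div_log hlam hθ hν hN0
  refine ⟨fun hθ1 => ?_, fun hθ1 => ?_⟩
  · simpa [spaceNormalizedCapacity, min_eq_right hθ1] using h
  · rwa [min_eq_left hθ1.le, div_mul_eq_mul_div] at h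
end

section
/- Let λ > 0, P̄ > 0 and N0 > 0 be real numbers, and set N = λ·P̄/(4π·N0). Then 2π · ∫_0^{1/λ} s · log( 1 + (P̄/N0) · (λ/(4π)) · (1/λ² − s²)^{−1/2} ) ds = π · [ log(1 + λN)/λ² + N²·log( Nλ/(1 + Nλ) ) + N/λ ]. -/
/-!
Writing `a = 1/λ`, the integrand is `s · log (1 + N / √(a² - s²))`. The substitution
`u = √(a² - s²)`, `s ds = -u du`, turns the integral into `∫₀ᵃ u · log (1 + N/u) du`, which has the
elementary primitive `-logCapacityPrimitive N` below; composing it with `s ↦ √(a² - s²)` gives an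
antiderivative of the integrand on `(0, a)` that is continuous on `[0, a]`. Since the integrand is
nonnegative, this already makes it integrable despite the logarithmic singularity at `s = a`, and
the fundamental theorem of calculus gives the closed form.
-/

open Real Set intervalIntegral

noncomputable def logCapacityPrimitive (N u : ℝ) : ℝ :=
  (N ^ 2 - u ^ 2) / 2 * log (u + N) + u * (u * log u) / 2 - N * u / 2

variable {N : ℝ}

lemma continuousOn_logCapacityPrimitive (hN : 0 < N) :
    ContinuousOn (logCapacityPrimitive N) (Ici 0) := by
  have hlog : ContinuousOn (fun u => log (u + N)) (Ici 0) :=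
    ContinuousOn.log (f := fun u => u + N) (by fun_prop) fun u (hu : 0 ≤ u) => by linarith
  unfold logCapacityPrimitive
  exact ((continuousOn_const.sub (continuousOn_pow 2)).div_const 2 |>.mul hlog).add
    ((continuous_id.mul continuous_mul_log).continuousOn.div_const 2) |>.sub (by fun_prop)

lemma hasDerivAt_logCapacityPrimitive (hN : 0 < N) {u : ℝ} (hu : 0 < u) :
    HasDerivAt (logCapacityPrimitive N) (-(u * log (1 + N / u))) u := by
  have huN : 0 < u + N := by positivity
  have h := ((((hasDerivAt_pow 2 u).const_sub (N ^ 2)).div_const 2).mul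
      (((hasDerivAt_id u).add_const N).log huN.ne')).add
      (((hasDerivAt_id u).mul ((hasDerivAt_id u).mul ((hasDerivAt_id u).log hu.ne'))).div_const 2)
      |>.sub (((hasDerivAt_id u).const_mul N).div_const 2)
  refine h.congr_deriv ?_
  simp only [id, Pi.mul_apply]
  rw [one_add_div hu.ne', log_div huN.ne' hu.ne']
  field_simp
  ring

lemma integral_mul_log_one_add_div_sqrt (hN : 0 < N) {a : ℝ} (ha : 0 ≤ a) :
    ∫ s in (0 : ℝ)..a, s * log (1 + N / √(a ^ 2 - s ^ 2))
      = logCapacityPrimitive N 0 - logCapacityPrimitive N a := by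
  set g : ℝ → ℝ := fun s => logCapacityPrimitive N √(a ^ 2 - s ^ 2)
  have hcont : ContinuousOn g (Icc 0 a) :=
    (continuousOn_logCapacityPrimitive hN).comp (by fun_prop) fun s _ => sqrt_nonneg _
  have hderiv : ∀ s ∈ Ioo 0 a, HasDerivAt g (s * log (1 + N / √(a ^ 2 - s ^ 2))) s := by
    rintro s ⟨hs0, hsa⟩
    have hq : 0 < a ^ 2 - s ^ 2 := by nlinarith
    have hu : 0 < √(a ^ 2 - s ^ 2) := sqrt_pos.2 hq
    refine ((hasDerivAt_logCapacityPrimitive hN hu).comp s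
      (((hasDerivAt_pow 2 s).const_sub _).sqrt hq.ne')).congr_deriv ?_
    field_simp
    push_cast
    ring
  have hnonneg : ∀ s ∈ Ioo 0 a, 0 ≤ s * log (1 + N / √(a ^ 2 - s ^ 2)) :=
    fun s hs => mul_nonneg hs.1.le (log_nonneg (by simp only [le_add_iff_nonneg_right]; positivity))
  rw [integral_eq_sub_of_hasDerivAt_of_le ha hcont hderiv
    ((intervalIntegrable_iff_integrableOn_Ioc_of_le ha).2
      (integrableOn_deriv_of_nonneg hcont hderiv hnonneg))]
  simp [g, sqrt_sq ha]

lemma rpow_neg_one_half_eq_inv_sqrt {x : ℝ} (hx : 0 ≤ x) : x ^ (-(1 : ℝ) / 2) = (√x)⁻¹ := by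
  rw [sqrt_eq_rpow, neg_div, rpow_neg hx]

/-- Eq. (22) of the paper: closed form for the space-normalized capacity of the
two-dimensional terminal deployment, where the channel PSD is
`G(s) = (λ/(4π))·(1/λ² - s²)^{-1/2}` on `0 ≤ s < 1/λ`, and `N = λP̄/(4πN0)`. -/
theorem normalized_capacity_2D (lam Pbar N0 : ℝ)
    (hlam : 0 < lam) (hP : 0 < Pbar) (hN0 : 0 < N0) :
    let N := lam * Pbar / (4 * π * N0)
    2 * π * (∫ s in (0 : ℝ)..(1 / lam),
        s * Real.log (1 + (Pbar / N0) * ((lam / (4 * π)) * (1 / lam ^ 2 - s ^ 2) ^ (-(1 : ℝ) / 2))))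
      = π * (Real.log (1 + lam * N) / lam ^ 2
          + N ^ 2 * Real.log (N * lam / (1 + N * lam)) + N / lam) := by
  intro N
  have hN : 0 < N := by positivity
  have hintegrand : ∀ s ∈ uIcc 0 (1 / lam),
      s * log (1 + Pbar / N0 * (lam / (4 * π) * (1 / lam ^ 2 - s ^ 2) ^ (-(1 : ℝ) / 2)))
        = s * log (1 + N / √((1 / lam) ^ 2 - s ^ 2)) := by
    intro s hs
    rw [uIcc_of_le (by positivity)] at hs
    have hq : 0 ≤ (1 / lam) ^ 2 - s ^ 2 := by nlinarith [hs.1, hs.2]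
    rw [div_pow, one_pow] at hq ⊢
    rw [rpow_neg_one_half_eq_inv_sqrt hq]
    simp only [N]
    field_simp
  rw [integral_congr hintegrand, integral_mul_log_one_add_div_sqrt hN (by positivity)]
  simp only [logCapacityPrimitive]
  have hsum : 1 / lam + N = (1 + lam * N) / lam := by field_simp
  rw [hsum, log_div (by positivity) hlam.ne', one_div, log_inv,
    log_div (by positivity) (by positivity), log_mul hN.ne' hlam.ne', mul_comm N lam]
  field_simp
  ring_nf
end

section
/- Fix real numbers P̄ > 0 and N0 > 0. For λ > 0, set N(λ) = λ·P̄/(4π·N0) and define C̄(λ) = π · [ log(1 + λ·N(λ))/λ² + N(λ)²·log( N(λ)·λ/(1 + N(λ)·λ) ) + N(λ)/λ ]. Then lim_{λ→0⁺} C̄(λ) = P̄/(2N0). -/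
/-! With `c = P̄/(4πN0)` one has `N(λ) = cλ`, so the bracket of `C̄(λ)` is
`log(1 + cλ²)/λ² + c · x log(x/(1 + x)) + c` with `x = cλ²`. The first term tends to the
derivative `c` of `t ↦ log(1 + ct)` at `0`, the middle one vanishes because `x log x → 0`,
so `C̄(λ) → 2πc = P̄/(2N0)`. -/

open Real Filter Topology

lemma tendsto_log_one_add_mul_div (c : ℝ) :
    Tendsto (fun t : ℝ => log (1 + c * t) / t) (𝓝[≠] 0) (𝓝 c) := by
  have hderiv : HasDerivAt (fun t : ℝ => log (1 + c * t)) c 0 := by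
    simpa using ((hasDerivAt_id (0 : ℝ)).const_mul c).const_add 1 |>.log (by simp)
  simpa [div_eq_inv_mul] using hderiv.tendsto_slope_zero

lemma tendsto_mul_log_div_one_add :
    Tendsto (fun x : ℝ => x * log (x / (1 + x))) (𝓝 0) (𝓝 0) := by
  have hden : ContinuousAt (fun x : ℝ => 1 + x) 0 := continuousAt_const.add continuousAt_id
  have hden0 : (1 : ℝ) + 0 ≠ 0 := by norm_num
  -- `x log(x/(1+x)) = (1 + x) · y log y` with `y = x/(1+x)`, continuous at `0`.
  have hcont : ContinuousAt (fun x : ℝ => (1 + x) * (x / (1 + x) * log (x / (1 + x)))) 0 :=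
    hden.mul (continuous_mul_log.continuousAt.comp (continuousAt_id.div hden hden0))
  have hlim : Tendsto (fun x : ℝ => (1 + x) * (x / (1 + x) * log (x / (1 + x)))) (𝓝 0) (𝓝 0) := by
    simpa using hcont.tendsto
  refine hlim.congr' ?_
  filter_upwards [hden.eventually_ne hden0] with x hx
  rw [← mul_assoc, mul_div_cancel₀ x hx]

lemma tendsto_capacity_2D (c : ℝ) :
    Tendsto (fun lam : ℝ =>
        π * (log (1 + lam * (c * lam)) / lam ^ 2
          + (c * lam) ^ 2 * log (c * lam * lam / (1 + c * lam * lam))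
          + c * lam / lam))
      (𝓝[≠] 0) (𝓝 (2 * π * c)) := by
  have hsq : Tendsto (fun lam : ℝ => lam ^ 2) (𝓝[≠] 0) (𝓝[≠] 0) :=
    tendsto_nhdsWithin_of_tendsto_nhds_of_eventually_within _
      ((continuous_pow 2).tendsto' 0 0 (by simp) |>.mono_left nhdsWithin_le_nhds)
      (eventually_nhdsWithin_of_forall fun lam hlam => pow_ne_zero 2 hlam)
  have hcsq : Tendsto (fun lam : ℝ => c * lam ^ 2) (𝓝[≠] 0) (𝓝 0) := by
    simpa using (tendsto_const_nhds (x := c)).mul (tendsto_nhdsWithin_iff.mp hsq).1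
  have hlim := ((tendsto_log_one_add_mul_div c).comp hsq).add
    ((tendsto_const_nhds (x := c)).mul (tendsto_mul_log_div_one_add.comp hcsq)) |>.add
    (tendsto_const_nhds (x := c)) |>.const_mul π
  rw [show 2 * π * c = π * (c + c * 0 + c) by ring]
  refine hlim.congr' ?_
  filter_upwards [self_mem_nhdsWithin] with lam (hlam : lam ≠ 0)
  simp only [Function.comp_apply]
  rw [show lam * (c * lam) = c * lam ^ 2 by ring, show c * lam * lam = c * lam ^ 2 by ring,
    mul_div_cancel_right₀ c hlam]
  ring

theorem normalized_capacity_limit_2D_general (Pbar N0 : ℝ) :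
    Tendsto (fun lam : ℝ =>
        π * (Real.log (1 + lam * (lam * Pbar / (4 * π * N0))) / lam ^ 2
          + (lam * Pbar / (4 * π * N0)) ^ 2 *
              Real.log ((lam * Pbar / (4 * π * N0)) * lam / (1 + (lam * Pbar / (4 * π * N0)) * lam))
          + (lam * Pbar / (4 * π * N0)) / lam))
      (nhdsWithin 0 (Set.Ioi 0)) (nhds (Pbar / (2 * N0))) := by
  have hN : ∀ lam : ℝ, lam * Pbar / (4 * π * N0) = Pbar / (4 * π * N0) * lam := fun lam => by ring
  have hvalue : Pbar / (2 * N0) = 2 * π * (Pbar / (4 * π * N0)) := by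
    rw [← mul_div_assoc, show 4 * π * N0 = 2 * π * (2 * N0) by ring,
      mul_div_mul_left _ _ (by positivity)]
  simp_rw [hN, hvalue]
  exact (tendsto_capacity_2D _).mono_left (nhdsWithin_mono _ fun _ h => ne_of_gt h)

/-- Remark 1 of the paper: as the wavelength `λ → 0⁺`, the closed-form space-normalized
capacity of the two-dimensional deployment (Eq. (22), with `N(λ) = λP̄/(4πN0)`) converges
to `P̄/(2N0)`. -/
theorem normalized_capacity_limit_2D (Pbar N0 : ℝ) (hP : 0 < Pbar) (hN0 : 0 < N0) :
    Tendsto (fun lam : ℝ =>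
        π * (Real.log (1 + lam * (lam * Pbar / (4 * π * N0))) / lam ^ 2
          + (lam * Pbar / (4 * π * N0)) ^ 2 *
              Real.log ((lam * Pbar / (4 * π * N0)) * lam / (1 + (lam * Pbar / (4 * π * N0)) * lam))
          + (lam * Pbar / (4 * π * N0)) / lam))
      (nhdsWithin 0 (Set.Ioi 0)) (nhds (Pbar / (2 * N0))) :=
  normalized_capacity_limit_2D_general Pbar N0
end

section
/- Fix real numbers λ > 0 and N0 > 0. For P̄ > 0, set N(P̄) = λ·P̄/(4π·N0) and define C̄(P̄) = π · [ log(1 + λ·N(P̄))/λ² + N(P̄)²·log( N(P̄)·λ/(1 + N(P̄)·λ) ) + N(P̄)/λ ]. Then lim_{P̄→∞} C̄(P̄)/log(P̄/N0) = π/λ². -/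
/-!
With `c = λ²/(4πN₀)` and `x = cP̄`, the capacity is `π/λ² · (log (1 + x) + g x)` where
`g x = x² log (x/(1+x)) + x` stays in `[0, 1]` (two applications of `log y ≤ y - 1`), while
`log (1 + cP̄) - log (P̄/N₀) → log (cN₀)`. Dividing by `log (P̄/N₀) → ∞` leaves `π/λ²`.
-/

open Real Filter Topology

lemma abs_sq_mul_log_div_one_add_add_le_one {x : ℝ} (hx : 0 < x) :
    |x ^ 2 * log (x / (1 + x)) + x| ≤ 1 := by
  have h1x : 0 < 1 + x := by positivity
  have hlower : 1 - (x / (1 + x))⁻¹ ≤ log (x / (1 + x)) := one_sub_inv_le_log_of_pos (by positivity)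
  have hupper : log (x / (1 + x)) ≤ x / (1 + x) - 1 := log_le_sub_one_of_pos (by positivity)
  have hlower' : x ^ 2 * (1 - (x / (1 + x))⁻¹) + x = 0 := by field_simp; ring
  have hupper' : x ^ 2 * (x / (1 + x) - 1) + x = x / (1 + x) := by field_simp; ring
  have hfrac : x / (1 + x) ≤ 1 := (div_le_one h1x).mpr (by linarith)
  rw [abs_le]
  constructor
  · nlinarith [mul_le_mul_of_nonneg_left hlower (sq_nonneg x)]
  · nlinarith [mul_le_mul_of_nonneg_left hupper (sq_nonneg x)]

lemma tendsto_log_one_add_mul_sub_log_div {c N₀ : ℝ} (hc : 0 < c) (hN₀ : 0 < N₀) :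
    Tendsto (fun P => log (1 + c * P) - log (P / N₀)) atTop (𝓝 (log (c * N₀))) := by
  have hlim : Tendsto (fun P => N₀ / P + c * N₀) atTop (𝓝 (c * N₀)) := by
    simpa using (tendsto_const_nhds.div_atTop tendsto_id).add_const (c * N₀)
  refine ((continuousAt_log (by positivity)).tendsto.comp hlim).congr' ?_
  filter_upwards [eventually_gt_atTop 0] with P hP
  rw [Function.comp_apply, ← log_div (by positivity) (by positivity)]
  congr 1
  field_simp

lemma Filter.Tendsto.add_div_of_tendsto_sub {α : Type*} {l : Filter α} {u v b : α → ℝ} {a : ℝ}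
    (hv : Tendsto v l atTop) (huv : Tendsto (fun x => u x - v x) l (𝓝 a))
    (hb : IsBoundedUnder (· ≤ ·) l fun x => ‖b x‖) :
    Tendsto (fun x => (u x + b x) / v x) l (𝓝 1) := by
  have hrest : Tendsto (fun x => (u x - v x) / v x + b x * (v x)⁻¹) l (𝓝 0) := by
    simpa using (huv.div_atTop hv).add
      (isBoundedUnder_le_mul_tendsto_zero hb (tendsto_inv_atTop_zero.comp hv))
  rw [← add_zero (1 : ℝ)]
  refine (hrest.const_add 1).congr' ?_
  filter_upwards [hv.eventually_gt_atTop 0] with x hx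
  field_simp
  ring

/-- Property 2 of the paper: the high-SNR slope of the closed-form space-normalized
capacity of the two-dimensional deployment (Eq. (22), with `N(P̄) = λP̄/(4πN0)`) equals
`π/λ²`, i.e. `π` independent signal-space dimensions per `λ²` of deployed surface. -/
theorem signal_dimensions_2D (lam N0 : ℝ) (hlam : 0 < lam) (hN0 : 0 < N0) :
    Tendsto (fun Pbar : ℝ =>
        (π * (Real.log (1 + lam * (lam * Pbar / (4 * π * N0))) / lam ^ 2
          + (lam * Pbar / (4 * π * N0)) ^ 2 *
              Real.log ((lam * Pbar / (4 * π * N0)) * lam / (1 + (lam * Pbar / (4 * π * N0)) * lam))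
          + (lam * Pbar / (4 * π * N0)) / lam))
          / Real.log (Pbar / N0))
      atTop (nhds (π / lam ^ 2)) := by
  set c := lam ^ 2 / (4 * π * N0) with hc_def
  have hc : 0 < c := by positivity
  have hlog : Tendsto (fun P => log (P / N0)) atTop atTop :=
    tendsto_log_atTop.comp (tendsto_id.atTop_div_const hN0)
  have hbounded : IsBoundedUnder (· ≤ ·) atTop
      fun P => ‖(c * P) ^ 2 * log (c * P / (1 + c * P)) + c * P‖ := by
    refine isBoundedUnder_of_eventually_le (a := 1) ?_
    filter_upwards [eventually_gt_atTop 0] with P hP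
    exact abs_sq_mul_log_div_one_add_add_le_one (by positivity)
  have hslope := (hlog.add_div_of_tendsto_sub
    (tendsto_log_one_add_mul_sub_log_div hc hN0) hbounded).const_mul (π / lam ^ 2)
  rw [mul_one] at hslope
  refine hslope.congr fun P => ?_
  have hN : lam * P / (4 * π * N0) = c * P / lam := by rw [hc_def]; field_simp
  rw [hN, mul_div_cancel₀ _ hlam.ne', div_mul_cancel₀ _ hlam.ne']
  ring
end
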